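/- Let 0 < γ_b < γ_t < 1 and Ae > 0. There exist constants C_l, C_u > 0 depending only on γ_b and γ_t (independent of σ and σ₀) such that for all σ, σ₀ > 0 for which Z(C_l) and Z(C_u) are well defined (the expressions under the square roots nonnegative) and lie in [0, Ae], every maximizer ẑ ∈ [0, Ae] of the map z ↦ min{ D(p₀(z) ‖ p₁(z)), D(p₁(z) ‖ p₀(z)) } satisfies Z(C_l) ≤ ẑ ≤ Z(C_u) (Theorem 6). -/

import Mathlib

open MeasureTheory Real

/-- The Gaussian tail function `Q(x) = ∫_x^∞ (1/√(2π)) e^{−u²/2} du`. -/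
noncomputable def gaussQ (x : ℝ) : ℝ :=
  ∫ u in Set.Ioi x, (Real.sqrt (2 * Real.pi))⁻¹ * Real.exp (-u ^ 2 / 2)

/-- Kullback-Leibler distance between `Bernoulli p` and `Bernoulli q`. -/
noncomputable def klBer (p q : ℝ) : ℝ :=
  p * Real.log (p / q) + (1 - p) * Real.log ((1 - p) / (1 - q))

/-- The localizing threshold value `Z(C)` of Theorem 6. -/
noncomputable def Zfun (Ae σ σ0 C : ℝ) : ℝ :=
  (-(Ae / (σ ^ 2 + σ0 ^ 2)) +
      Real.sqrt (Ae ^ 2 / (σ ^ 2 + σ0 ^ 2) ^ 2 -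
        (1 / (σ ^ 2 + σ0 ^ 2) - 1 / σ0 ^ 2) *
          (Ae ^ 2 / (σ ^ 2 + σ0 ^ 2) -
            2 * Real.log (C * σ0 / Real.sqrt (σ ^ 2 + σ0 ^ 2))))) /
    (1 / σ0 ^ 2 - 1 / (σ ^ 2 + σ0 ^ 2))

/-- The radicand appearing in `Zfun`. -/
noncomputable def Zrad (Ae σ σ0 C : ℝ) : ℝ :=
  Ae ^ 2 / (σ ^ 2 + σ0 ^ 2) ^ 2 -
    (1 / (σ ^ 2 + σ0 ^ 2) - 1 / σ0 ^ 2) *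
      (Ae ^ 2 / (σ ^ 2 + σ0 ^ 2) -
        2 * Real.log (C * σ0 / Real.sqrt (σ ^ 2 + σ0 ^ 2)))

/-- Threshold-exceedance probability under photoelectron probability `γ`. -/
noncomputable def pCross (γ Ae σ0 σ z : ℝ) : ℝ :=
  (1 - γ) * gaussQ (z / σ0) + γ * gaussQ ((z - Ae) / Real.sqrt (σ0 ^ 2 + σ ^ 2))

/-!
On `(0, Ae)` write `q = Q(z/σ₀) < 1/2 < r = Q((z - Ae)/√(σ₀² + σ²))`, so that
`p_γ = (1 - γ) q + γ r` and `p_γ' = -((1 - γ) α + γ β)`, where `α` and `β` are the two Gaussian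
densities at `z`. Bounding `log (p₁/p₀) + log ((1 - p₀)/(1 - p₁))` by `1 - 1/x ≤ log x ≤ x - 1`
shows that both Kullback-Leibler distances strictly increase where `α > C_l β` and strictly
decrease where `α < C_u β`. Since `α / β = (√(σ₀² + σ²)/σ₀) · exp (E(z)/2)` with
`E(z) = (z - Ae)²/(σ² + σ₀²) - z²/σ₀²` strictly decreasing on `[0, ∞)`, and `Z(C)` is the root of
`E(Z) = 2 log (C σ₀ / √(σ² + σ₀²))`, this happens left of `Z(C_l)` and right of `Z(C_u)`
respectively. A maximizer of the minimum of two functions cannot lie where both strictly increase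
towards a feasible point, nor where both strictly decrease from one.
-/

open Set ProbabilityTheory

lemma gaussQ_eq_integral (x : ℝ) : gaussQ x = ∫ u in Ioi x, gaussianPDFReal 0 1 u := by
  simp [gaussQ, gaussianPDFReal, neg_div]

lemma continuous_gaussianPDFReal_zero_one : Continuous (gaussianPDFReal 0 1) := by
  rw [gaussianPDFReal_def]
  fun_prop

lemma gaussQ_pos (x : ℝ) : 0 < gaussQ x := by
  have hsupp : Function.support (gaussianPDFReal 0 1) = univ :=
    Function.support_eq_univ fun u => (gaussianPDFReal_pos 0 1 u one_ne_zero).ne'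
  rw [gaussQ_eq_integral, setIntegral_pos_iff_support_of_nonneg_ae
    (.of_forall fun u => gaussianPDFReal_nonneg 0 1 u)
    (integrable_gaussianPDFReal 0 1).integrableOn, hsupp]
  simp

lemma integral_Iic_add_gaussQ (x : ℝ) : (∫ u in Iic x, gaussianPDFReal 0 1 u) + gaussQ x = 1 := by
  rw [gaussQ_eq_integral, intervalIntegral.integral_Iic_add_Ioi
    (integrable_gaussianPDFReal 0 1).integrableOn (integrable_gaussianPDFReal 0 1).integrableOn,
    integral_gaussianPDFReal_eq_one 0 one_ne_zero]

lemma gaussQ_neg (x : ℝ) : gaussQ (-x) = ∫ u in Iic x, gaussianPDFReal 0 1 u := by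
  rw [gaussQ_eq_integral, ← neg_neg x, ← integral_comp_neg_Ioi, neg_neg]
  simp [gaussianPDFReal]

lemma gaussQ_lt_one (x : ℝ) : gaussQ x < 1 := by
  linarith [integral_Iic_add_gaussQ x, gaussQ_neg x, gaussQ_pos (-x)]

lemma gaussQ_zero : gaussQ 0 = 1 / 2 := by
  have h := integral_Iic_add_gaussQ 0
  rw [← gaussQ_neg, neg_zero] at h
  linarith

lemma hasDerivAt_gaussQ (x : ℝ) : HasDerivAt gaussQ (-gaussianPDFReal 0 1 x) x := by
  have hint : ∀ y : ℝ, IntegrableOn (gaussianPDFReal 0 1) (Iic y) :=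
    fun _ => (integrable_gaussianPDFReal 0 1).integrableOn
  have hQ : gaussQ = fun y => gaussQ 0 - ∫ u in (0 : ℝ)..y, gaussianPDFReal 0 1 u := by
    funext y
    rw [← intervalIntegral.integral_Iic_sub_Iic (hint 0) (hint y)]
    linarith [integral_Iic_add_gaussQ 0, integral_Iic_add_gaussQ y]
  rw [hQ]
  exact (intervalIntegral.integral_hasDerivAt_right
    (integrable_gaussianPDFReal 0 1).intervalIntegrable
    (continuous_gaussianPDFReal_zero_one.stronglyMeasurableAtFilter _ _)
    continuous_gaussianPDFReal_zero_one.continuousAt).const_sub _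

lemma gaussQ_strictAnti : StrictAnti gaussQ :=
  strictAnti_of_hasDerivAt_neg hasDerivAt_gaussQ
    fun x => neg_neg_of_pos (gaussianPDFReal_pos 0 1 x one_ne_zero)

noncomputable def klBerDeriv (p q p' q' : ℝ) : ℝ :=
  p' * (log (p / q) - log ((1 - p) / (1 - q))) + q' * ((q - p) / (q * (1 - q)))

lemma HasDerivAt.klBer {P Q : ℝ → ℝ} {P' Q' z : ℝ} (hP : HasDerivAt P P' z)
    (hQ : HasDerivAt Q Q' z) (hP0 : P z ≠ 0) (hP1 : P z ≠ 1) (hQ0 : Q z ≠ 0) (hQ1 : Q z ≠ 1) :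
    HasDerivAt (fun y => klBer (P y) (Q y)) (klBerDeriv (P z) (Q z) P' Q') z := by
  have hP1' : 1 - P z ≠ 0 := sub_ne_zero.2 hP1.symm
  have hQ1' : 1 - Q z ≠ 0 := sub_ne_zero.2 hQ1.symm
  have hlog := (hP.div hQ hQ0).log (div_ne_zero hP0 hQ0)
  have hlog' := ((hP.const_sub 1).div (hQ.const_sub 1) hQ1').log (div_ne_zero hP1' hQ1')
  simp only [Pi.div_apply] at hlog hlog'
  refine ((hP.mul hlog).add ((hP.const_sub 1).mul hlog')).congr_deriv ?_
  unfold klBerDeriv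
  field_simp
  ring

lemma sub_div_le_log_div {a b : ℝ} (ha : 0 < a) (hb : 0 < b) : (b - a) / b ≤ log (b / a) := by
  have h := Real.one_sub_inv_le_log_of_pos (div_pos hb ha)
  rwa [inv_div, one_sub_div hb.ne'] at h

lemma log_div_le_sub_div {a b : ℝ} (ha : 0 < a) (hb : 0 < b) : log (b / a) ≤ (b - a) / a := by
  have h := Real.log_le_sub_one_of_pos (div_pos hb ha)
  rwa [div_sub_one ha.ne'] at h

lemma klBerDeriv_neg_neg_eq (p0 p1 Wb Wt : ℝ) :
    klBerDeriv p0 p1 (-Wb) (-Wt) =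
        Wb * (log (p1 / p0) + log ((1 - p0) / (1 - p1))) - Wt * ((p1 - p0) / (p1 * (1 - p1))) ∧
      klBerDeriv p1 p0 (-Wt) (-Wb) =
        Wb * ((p1 - p0) / (p0 * (1 - p0))) - Wt * (log (p1 / p0) + log ((1 - p0) / (1 - p1))) := by
  unfold klBerDeriv
  rw [← inv_div p1 p0, ← inv_div (1 - p0), Real.log_inv, Real.log_inv]
  constructor <;> ring

section KLSlopes

variable {p0 p1 Wb Wt : ℝ}

lemma log_ratio_bounds (hp0 : 0 < p0) (hp01 : p0 < p1) (hp1 : p1 < 1) :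
    (p1 - p0) / p1 + (p1 - p0) / (1 - p0) ≤ log (p1 / p0) + log ((1 - p0) / (1 - p1)) ∧
      log (p1 / p0) + log ((1 - p0) / (1 - p1)) ≤ (p1 - p0) / p0 + (p1 - p0) / (1 - p1) := by
  have h1p0 : 0 < 1 - p0 := by linarith
  have h1p1 : 0 < 1 - p1 := by linarith
  have e : (1 - p0) - (1 - p1) = p1 - p0 := by ring
  constructor
  · have := sub_div_le_log_div h1p1 h1p0
    rw [e] at this
    linarith [sub_div_le_log_div hp0 (hp0.trans hp01)]
  · have := log_div_le_sub_div h1p1 h1p0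
    rw [e] at this
    linarith [log_div_le_sub_div hp0 (hp0.trans hp01)]

lemma klBerDeriv_pos_of_lt (hp0 : 0 < p0) (hp01 : p0 < p1) (hp1 : p1 < 1) (hWb : 0 ≤ Wb)
    (hWt : 0 ≤ Wt) (h : Wt * (1 - p0) < Wb * (1 - p1) * (1 + (p1 - p0))) :
    0 < klBerDeriv p0 p1 (-Wb) (-Wt) ∧ 0 < klBerDeriv p1 p0 (-Wt) (-Wb) := by
  obtain ⟨hA, hB⟩ := klBerDeriv_neg_neg_eq p0 p1 Wb Wt
  obtain ⟨hlo, hhi⟩ := log_ratio_bounds hp0 hp01 hp1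
  have hδ : 0 < p1 - p0 := sub_pos.2 hp01
  have hp1' : 0 < p1 := hp0.trans hp01
  have h1p0 : 0 < 1 - p0 := by linarith
  have h1p1 : 0 < 1 - p1 := by linarith
  rw [hA, hB]
  constructor
  · calc (0 : ℝ) < (p1 - p0) * (Wb * (1 - p1) * (1 + (p1 - p0)) - Wt * (1 - p0)) /
          (p1 * (1 - p0) * (1 - p1)) := by
          apply div_pos (mul_pos hδ (by linarith)); positivity
      _ = Wb * ((p1 - p0) / p1 + (p1 - p0) / (1 - p0)) - Wt * ((p1 - p0) / (p1 * (1 - p1))) := by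
          field_simp; ring
      _ ≤ _ := by gcongr
  · -- multiply `h` by `1 - δ`, where `δ = p1 - p0`, and use `(1 + δ) (1 - δ) ≤ 1`
    have h' : Wt * (1 - p0) * (1 - (p1 - p0)) < Wb * (1 - p1) := by
      nlinarith [mul_lt_mul_of_pos_right h (show 0 < 1 - (p1 - p0) by linarith),
        mul_nonneg (mul_nonneg hWb h1p1.le) (sq_nonneg (p1 - p0))]
    calc (0 : ℝ) < (p1 - p0) * (Wb * (1 - p1) - Wt * (1 - p0) * (1 - (p1 - p0))) /
          (p0 * (1 - p0) * (1 - p1)) := by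
          apply div_pos (mul_pos hδ (by linarith)); positivity
      _ = Wb * ((p1 - p0) / (p0 * (1 - p0))) - Wt * ((p1 - p0) / p0 + (p1 - p0) / (1 - p1)) := by
          field_simp; ring
      _ ≤ _ := by gcongr

lemma klBerDeriv_neg_of_lt (hp0 : 0 < p0) (hp01 : p0 < p1) (hp1 : p1 < 1) (hWb : 0 ≤ Wb)
    (hWt : 0 ≤ Wt) (h : Wb * p1 < Wt * p0 * (1 + (p1 - p0))) :
    klBerDeriv p0 p1 (-Wb) (-Wt) < 0 ∧ klBerDeriv p1 p0 (-Wt) (-Wb) < 0 := by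
  obtain ⟨hA, hB⟩ := klBerDeriv_neg_neg_eq p0 p1 Wb Wt
  obtain ⟨hlo, hhi⟩ := log_ratio_bounds hp0 hp01 hp1
  have hδ : 0 < p1 - p0 := sub_pos.2 hp01
  have hp1' : 0 < p1 := hp0.trans hp01
  have h1p0 : 0 < 1 - p0 := by linarith
  have h1p1 : 0 < 1 - p1 := by linarith
  rw [hA, hB]
  constructor
  · -- multiply `h` by `1 - δ`, where `δ = p1 - p0`, and use `(1 + δ) (1 - δ) ≤ 1`
    have h' : Wb * p1 * (1 - (p1 - p0)) < Wt * p0 := by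
      nlinarith [mul_lt_mul_of_pos_right h (show 0 < 1 - (p1 - p0) by linarith),
        mul_nonneg (mul_nonneg hWt hp0.le) (sq_nonneg (p1 - p0))]
    calc _ ≤ Wb * ((p1 - p0) / p0 + (p1 - p0) / (1 - p1)) - Wt * ((p1 - p0) / (p1 * (1 - p1))) := by
          gcongr
      _ = (p1 - p0) * (Wb * p1 * (1 - (p1 - p0)) - Wt * p0) / (p0 * p1 * (1 - p1)) := by
          field_simp; ring
      _ < 0 := by
          apply div_neg_of_neg_of_pos (mul_neg_of_pos_of_neg hδ (by linarith)); positivity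
  · calc _ ≤ Wb * ((p1 - p0) / (p0 * (1 - p0))) - Wt * ((p1 - p0) / p1 + (p1 - p0) / (1 - p0)) := by
          gcongr
      _ = (p1 - p0) * (Wb * p1 - Wt * p0 * (1 + (p1 - p0))) / (p0 * p1 * (1 - p0)) := by
          field_simp; ring
      _ < 0 := by
          apply div_neg_of_neg_of_pos (mul_neg_of_pos_of_neg hδ (by linarith)); positivity

end KLSlopes

noncomputable def lowerThresholdConst (γt : ℝ) : ℝ := (2 - γt + γt ^ 2) / (1 - γt) ^ 2

noncomputable def upperThresholdConst (γb γt : ℝ) : ℝ := γb * γt / (2 - γb + γb * γt)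

section Mixtures

variable {γb γt q r α β : ℝ}

lemma mix_lt_of_lowerThresholdConst_lt (hγb : 0 ≤ γb) (hγbt : γb < γt) (hγt : γt < 1)
    (hqr : q < r) (hq : q ≤ 1 / 2) (hr : r ≤ 1) (hβ : 0 < β)
    (hα : lowerThresholdConst γt * β < α) :
    ((1 - γt) * α + γt * β) * (1 - ((1 - γb) * q + γb * r)) <
      ((1 - γb) * α + γb * β) * (1 - ((1 - γt) * q + γt * r)) *
        (1 + (((1 - γt) * q + γt * r) - ((1 - γb) * q + γb * r))) := by
  set p0 := (1 - γb) * q + γb * r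
  set p1 := (1 - γt) * q + γt * r
  set Wb := (1 - γb) * α + γb * β
  set Wt := (1 - γt) * α + γt * β
  have h1γt : 0 < 1 - γt := by linarith
  have hα' : β * (2 - γt + γt ^ 2) < α * (1 - γt) ^ 2 := by
    rwa [lowerThresholdConst, div_mul_eq_mul_div, div_lt_iff₀ (by positivity), mul_comm] at hα
  have hαβ : β < α := by nlinarith
  have hWt : 0 ≤ Wt :=
    add_nonneg (mul_nonneg h1γt.le (by linarith)) (mul_nonneg (by linarith) hβ.le)
  -- the choice of `lowerThresholdConst` is exactly what makes this hold
  have hscalar : Wt * (1 + γt) < 2 * (α - β) * (1 - γt) := by linear_combination hα'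
  have h1p1 : (1 - γt) * (r - q) ≤ 1 - p1 := by nlinarith
  have hp1 : p1 ≤ (1 + γt) / 2 := by nlinarith
  have hinner : Wt * p1 * (r - q) < (α - β) * (1 - p1) * (1 + (p1 - p0)) := by
    have hu : 0 < r - q := sub_pos.2 hqr
    calc Wt * p1 * (r - q) ≤ Wt * ((1 + γt) / 2) * (r - q) := by gcongr
      _ < (α - β) * (1 - γt) * (r - q) := by nlinarith
      _ ≤ (α - β) * (1 - p1) := by nlinarith
      _ ≤ (α - β) * (1 - p1) * (1 + (p1 - p0)) := by
          refine le_mul_of_one_le_right (by nlinarith) ?_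
          nlinarith
  have hsplit : Wb * (1 - p1) * (1 + (p1 - p0)) - Wt * (1 - p0) =
      (γt - γb) * ((α - β) * (1 - p1) * (1 + (p1 - p0)) - Wt * p1 * (r - q)) := by ring
  linarith [mul_pos (sub_pos.2 hγbt) (sub_pos.2 hinner)]

lemma mix_lt_of_lt_upperThresholdConst (hγb : 0 < γb) (hγbt : γb < γt) (hγt : γt ≤ 1)
    (hq : 0 ≤ q) (hqr : q < r) (hr : 1 / 2 ≤ r) (hα : 0 < α)
    (hβ : α < upperThresholdConst γb γt * β) :
    ((1 - γb) * α + γb * β) * ((1 - γt) * q + γt * r) <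
      ((1 - γt) * α + γt * β) * ((1 - γb) * q + γb * r) *
        (1 + (((1 - γt) * q + γt * r) - ((1 - γb) * q + γb * r))) := by
  set p0 := (1 - γb) * q + γb * r
  set p1 := (1 - γt) * q + γt * r
  set Wb := (1 - γb) * α + γb * β
  set Wt := (1 - γt) * α + γt * β
  have hγt0 : 0 < γt := hγb.trans hγbt
  have hβ' : α * (2 - γb + γb * γt) < β * (γb * γt) := by
    rw [upperThresholdConst, div_mul_eq_mul_div, lt_div_iff₀ (by nlinarith)] at hβ
    linarith
  have hαβ : α < β := by nlinarith [mul_pos hγb hγt0]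
  have hWt : 0 ≤ Wt :=
    add_nonneg (mul_nonneg (by linarith) hα.le) (mul_nonneg hγt0.le (by linarith))
  -- the choice of `upperThresholdConst` is exactly what makes this hold
  have hscalar : Wt * (2 - γb) < 2 * γt * (β - α) := by linear_combination hβ'
  have hp0 : γb / 2 ≤ p0 := by nlinarith
  have hp1 : γt * (r - q) ≤ p1 := by nlinarith
  have hinner : Wt * (r - q) * (1 - p0) < (β - α) * p1 := by
    have hu : 0 < r - q := sub_pos.2 hqr
    calc Wt * (r - q) * (1 - p0) ≤ Wt * (r - q) * (1 - γb / 2) := by gcongr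
      _ < (β - α) * (γt * (r - q)) := by nlinarith
      _ ≤ (β - α) * p1 := by gcongr
  have hsplit : Wt * p0 * (1 + (p1 - p0)) - Wb * p1 =
      (γt - γb) * ((β - α) * p1 - Wt * (r - q) * (1 - p0)) := by ring
  linarith [mul_pos (sub_pos.2 hγbt) (sub_pos.2 hinner)]

-- The densities of `N(0, σ₀²)` and `N(Ae, σ₀² + σ²)`: the receiver output without and with a
-- photoelectron.
noncomputable def darkDensity (σ0 z : ℝ) : ℝ := gaussianPDFReal 0 1 (z / σ0) / σ0

noncomputable def pulseDensity (Ae σ0 σ z : ℝ) : ℝ :=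
  gaussianPDFReal 0 1 ((z - Ae) / √(σ0 ^ 2 + σ ^ 2)) / √(σ0 ^ 2 + σ ^ 2)

noncomputable def outputDensity (γ Ae σ0 σ z : ℝ) : ℝ :=
  (1 - γ) * darkDensity σ0 z + γ * pulseDensity Ae σ0 σ z

noncomputable def exponentGap (Ae σ σ0 z : ℝ) : ℝ :=
  (z - Ae) ^ 2 / (σ ^ 2 + σ0 ^ 2) - z ^ 2 / σ0 ^ 2

section Densities

variable {Ae σ σ0 C z : ℝ}

lemma darkDensity_pos (hσ0 : 0 < σ0) (z : ℝ) : 0 < darkDensity σ0 z :=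
  div_pos (gaussianPDFReal_pos 0 1 _ one_ne_zero) hσ0

lemma pulseDensity_pos (hσ0 : 0 < σ0) (z : ℝ) : 0 < pulseDensity Ae σ0 σ z :=
  div_pos (gaussianPDFReal_pos 0 1 _ one_ne_zero) (Real.sqrt_pos.2 (by positivity))

lemma outputDensity_nonneg {γ : ℝ} (hγ : γ ∈ Icc 0 1) (hσ0 : 0 < σ0) (z : ℝ) :
    0 ≤ outputDensity γ Ae σ0 σ z :=
  convex_Ici (0 : ℝ) (darkDensity_pos hσ0 z).le (pulseDensity_pos hσ0 z).le (sub_nonneg.2 hγ.2)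
    hγ.1 (sub_add_cancel 1 γ)

lemma darkDensity_eq (hσ0 : 0 < σ0) (z : ℝ) :
    darkDensity σ0 z =
      √(σ ^ 2 + σ0 ^ 2) / σ0 * exp (exponentGap Ae σ σ0 z / 2) * pulseDensity Ae σ0 σ z := by
  have hs : 0 < σ0 ^ 2 + σ ^ 2 := by positivity
  rw [add_comm (σ ^ 2)]
  simp only [darkDensity, pulseDensity, exponentGap, gaussianPDFReal, NNReal.coe_one, mul_one,
    sub_zero]
  field_simp
  rw [mul_comm (exp _), mul_assoc, ← Real.exp_add, Real.sq_sqrt hs.le]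
  congr 1
  field_simp
  ring

lemma mul_pulseDensity_lt_darkDensity_iff (hσ0 : 0 < σ0) (hC : 0 < C) :
    C * pulseDensity Ae σ0 σ z < darkDensity σ0 z ↔
      2 * log (C * σ0 / √(σ ^ 2 + σ0 ^ 2)) < exponentGap Ae σ σ0 z := by
  rw [darkDensity_eq hσ0, mul_lt_mul_iff_left₀ (pulseDensity_pos hσ0 z),
    ← div_lt_iff₀' (by positivity), div_div_eq_mul_div, ← Real.log_lt_iff_lt_exp (by positivity)]
  constructor <;> intro h <;> linarith

lemma darkDensity_lt_mul_pulseDensity_iff (hσ0 : 0 < σ0) (hC : 0 < C) :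
    darkDensity σ0 z < C * pulseDensity Ae σ0 σ z ↔
      exponentGap Ae σ σ0 z < 2 * log (C * σ0 / √(σ ^ 2 + σ0 ^ 2)) := by
  rw [darkDensity_eq hσ0, mul_lt_mul_iff_left₀ (pulseDensity_pos hσ0 z),
    ← lt_div_iff₀' (by positivity), div_div_eq_mul_div, ← Real.lt_log_iff_exp_lt (by positivity)]
  constructor <;> intro h <;> linarith

lemma exponentGap_strictAntiOn (hσ0 : 0 < σ0) (hAe : 0 < Ae) :
    StrictAntiOn (exponentGap Ae σ σ0) (Ici 0) := by
  intro z1 hz1 z2 _ h12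
  have hd : 0 ≤ 1 / σ0 ^ 2 - 1 / (σ ^ 2 + σ0 ^ 2) := by
    rw [sub_nonneg]
    gcongr
    nlinarith
  have hsplit : exponentGap Ae σ σ0 z1 - exponentGap Ae σ σ0 z2 =
      (z2 - z1) *
        ((z1 + z2) * (1 / σ0 ^ 2 - 1 / (σ ^ 2 + σ0 ^ 2)) + 2 * Ae / (σ ^ 2 + σ0 ^ 2)) := by
    unfold exponentGap
    field_simp
    ring
  have hpos : 0 < (z1 + z2) * (1 / σ0 ^ 2 - 1 / (σ ^ 2 + σ0 ^ 2)) + 2 * Ae / (σ ^ 2 + σ0 ^ 2) :=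
    add_pos_of_nonneg_of_pos (mul_nonneg (by linarith [mem_Ici.1 hz1]) hd) (by positivity)
  nlinarith [mul_pos (sub_pos.2 h12) hpos]

lemma quadratic_eq_of_eq_root {b c d z : ℝ} (hd : d ≠ 0) (hD : 0 ≤ b ^ 2 + d * c)
    (hz : z = (-b + √(b ^ 2 + d * c)) / d) : d * z ^ 2 + 2 * b * z = c := by
  have hzd : z * d + b = √(b ^ 2 + d * c) := by
    rw [hz, div_mul_cancel₀ _ hd]
    ring
  have hsq : (z * d + b) ^ 2 = b ^ 2 + d * c := by rw [hzd, Real.sq_sqrt hD]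
  refine mul_left_cancel₀ hd ?_
  linear_combination hsq

lemma exponentGap_Zfun (hσ : 0 < σ) (hσ0 : 0 < σ0) (hrad : 0 ≤ Zrad Ae σ σ0 C) :
    exponentGap Ae σ σ0 (Zfun Ae σ σ0 C) = 2 * log (C * σ0 / √(σ ^ 2 + σ0 ^ 2)) := by
  have hd : 1 / σ0 ^ 2 - 1 / (σ ^ 2 + σ0 ^ 2) ≠ 0 := by
    rw [sub_ne_zero]
    apply ne_of_gt
    gcongr
    nlinarith
  have hroot := quadratic_eq_of_eq_root (z := Zfun Ae σ σ0 C) (b := Ae / (σ ^ 2 + σ0 ^ 2))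
    (c := Ae ^ 2 / (σ ^ 2 + σ0 ^ 2) - 2 * log (C * σ0 / √(σ ^ 2 + σ0 ^ 2))) hd
    (by convert hrad using 1; rw [Zrad, div_pow]; ring) (by rw [Zfun, div_pow]; congr 3; ring)
  unfold exponentGap
  linear_combination -hroot

end Densities

section Crossing

variable {γ γ' Ae σ σ0 x : ℝ}

lemma hasDerivAt_pCross (γ Ae σ0 σ z : ℝ) :
    HasDerivAt (pCross γ Ae σ0 σ) (-outputDensity γ Ae σ0 σ z) z := by
  have hdark := (hasDerivAt_gaussQ (z / σ0)).comp z ((hasDerivAt_id z).div_const σ0)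
  have hpulse := (hasDerivAt_gaussQ _).comp z
    (((hasDerivAt_id z).sub_const Ae).div_const √(σ0 ^ 2 + σ ^ 2))
  refine ((hdark.const_mul (1 - γ)).add (hpulse.const_mul γ)).congr_deriv ?_
  simp only [outputDensity, darkDensity, pulseDensity, id]
  ring

lemma pCross_mem_Ioo (hγ0 : 0 ≤ γ) (hγ1 : γ ≤ 1) (z : ℝ) : pCross γ Ae σ0 σ z ∈ Ioo 0 1 :=
  convex_Ioo (0 : ℝ) 1 ⟨gaussQ_pos _, gaussQ_lt_one _⟩ ⟨gaussQ_pos _, gaussQ_lt_one _⟩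
    (sub_nonneg.2 hγ1) hγ0 (sub_add_cancel 1 γ)

lemma hasDerivAt_klBer_pCross (hγ : γ ∈ Icc 0 1) (hγ' : γ' ∈ Icc 0 1) (z : ℝ) :
    HasDerivAt (fun z => klBer (pCross γ Ae σ0 σ z) (pCross γ' Ae σ0 σ z))
      (klBerDeriv (pCross γ Ae σ0 σ z) (pCross γ' Ae σ0 σ z)
        (-outputDensity γ Ae σ0 σ z) (-outputDensity γ' Ae σ0 σ z)) z := by
  obtain ⟨hp0, hp1⟩ := pCross_mem_Ioo (Ae := Ae) (σ0 := σ0) (σ := σ) hγ.1 hγ.2 z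
  obtain ⟨hq0, hq1⟩ := pCross_mem_Ioo (Ae := Ae) (σ0 := σ0) (σ := σ) hγ'.1 hγ'.2 z
  exact (hasDerivAt_pCross γ Ae σ0 σ z).klBer (hasDerivAt_pCross γ' Ae σ0 σ z)
    hp0.ne' hp1.ne hq0.ne' hq1.ne

lemma gaussQ_lt_half_lt_gaussQ (hσ0 : 0 < σ0) (hx : x ∈ Ioo 0 Ae) :
    gaussQ (x / σ0) < 1 / 2 ∧ 1 / 2 < gaussQ ((x - Ae) / √(σ0 ^ 2 + σ ^ 2)) := by
  rw [← gaussQ_zero]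
  exact ⟨gaussQ_strictAnti (div_pos hx.1 hσ0),
    gaussQ_strictAnti (div_neg_of_neg_of_pos (sub_neg.2 hx.2) (Real.sqrt_pos.2 (by positivity)))⟩

lemma pCross_lt_pCross (hσ0 : 0 < σ0) (hx : x ∈ Ioo 0 Ae) (hγ : γ < γ') :
    pCross γ Ae σ0 σ x < pCross γ' Ae σ0 σ x := by
  obtain ⟨hq, hr⟩ := gaussQ_lt_half_lt_gaussQ (σ := σ) hσ0 hx
  unfold pCross
  nlinarith [mul_pos (sub_pos.2 hγ) (sub_pos.2 (hq.trans hr))]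

end Crossing

lemma strictMonoOn_Icc_of_hasDerivAt_pos {f f' : ℝ → ℝ} {a b : ℝ}
    (hf : ∀ x, HasDerivAt f (f' x) x) (hf' : ∀ x ∈ Ioo a b, 0 < f' x) :
    StrictMonoOn f (Icc a b) :=
  strictMonoOn_of_hasDerivWithinAt_pos (convex_Icc a b)
    (fun x _ => (hf x).continuousAt.continuousWithinAt) (fun x _ => (hf x).hasDerivWithinAt)
    (by rwa [interior_Icc])

lemma strictAntiOn_Icc_of_hasDerivAt_neg {f f' : ℝ → ℝ} {a b : ℝ}
    (hf : ∀ x, HasDerivAt f (f' x) x) (hf' : ∀ x ∈ Ioo a b, f' x < 0) :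
    StrictAntiOn f (Icc a b) :=
  strictAntiOn_of_hasDerivWithinAt_neg (convex_Icc a b)
    (fun x _ => (hf x).continuousAt.continuousWithinAt) (fun x _ => (hf x).hasDerivWithinAt)
    (by rwa [interior_Icc])

section Monotonicity

variable {γb γt Ae σ σ0 a b : ℝ}

lemma strictMonoOn_klBer_pCross (hγb : 0 < γb) (hγbt : γb < γt) (hγt : γt < 1) (hσ0 : 0 < σ0)
    (ha : 0 ≤ a) (hb : b ≤ Ae)
    (hdens : ∀ x ∈ Ioo a b, lowerThresholdConst γt * pulseDensity Ae σ0 σ x < darkDensity σ0 x) :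
    StrictMonoOn (fun z => klBer (pCross γb Ae σ0 σ z) (pCross γt Ae σ0 σ z)) (Icc a b) ∧
      StrictMonoOn (fun z => klBer (pCross γt Ae σ0 σ z) (pCross γb Ae σ0 σ z)) (Icc a b) := by
  have hγb' : γb ∈ Icc (0 : ℝ) 1 := ⟨hγb.le, by linarith⟩
  have hγt' : γt ∈ Icc (0 : ℝ) 1 := ⟨by linarith, hγt.le⟩
  have hslopes : ∀ x ∈ Ioo a b,
      0 < klBerDeriv (pCross γb Ae σ0 σ x) (pCross γt Ae σ0 σ x)
          (-outputDensity γb Ae σ0 σ x) (-outputDensity γt Ae σ0 σ x) ∧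
        0 < klBerDeriv (pCross γt Ae σ0 σ x) (pCross γb Ae σ0 σ x)
          (-outputDensity γt Ae σ0 σ x) (-outputDensity γb Ae σ0 σ x) := by
    intro x hx
    have hx' : x ∈ Ioo 0 Ae := ⟨ha.trans_lt hx.1, hx.2.trans_le hb⟩
    obtain ⟨hq, hr⟩ := gaussQ_lt_half_lt_gaussQ (σ := σ) hσ0 hx'
    have hα := darkDensity_pos hσ0 x
    have hβ := pulseDensity_pos (Ae := Ae) (σ := σ) hσ0 x
    exact klBerDeriv_pos_of_lt (pCross_mem_Ioo hγb'.1 hγb'.2 x).1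
      (pCross_lt_pCross hσ0 hx' hγbt) (pCross_mem_Ioo hγt'.1 hγt'.2 x).2
      (outputDensity_nonneg hγb' hσ0 x) (outputDensity_nonneg hγt' hσ0 x)
      (mix_lt_of_lowerThresholdConst_lt hγb.le hγbt hγt (hq.trans hr) hq.le
        (gaussQ_lt_one _).le hβ (hdens x hx))
  exact ⟨strictMonoOn_Icc_of_hasDerivAt_pos (hasDerivAt_klBer_pCross hγb' hγt')
      fun x hx => (hslopes x hx).1,
    strictMonoOn_Icc_of_hasDerivAt_pos (hasDerivAt_klBer_pCross hγt' hγb')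
      fun x hx => (hslopes x hx).2⟩

lemma strictAntiOn_klBer_pCross (hγb : 0 < γb) (hγbt : γb < γt) (hγt : γt < 1) (hσ0 : 0 < σ0)
    (ha : 0 ≤ a) (hb : b ≤ Ae)
    (hdens : ∀ x ∈ Ioo a b, darkDensity σ0 x < upperThresholdConst γb γt * pulseDensity Ae σ0 σ x) :
    StrictAntiOn (fun z => klBer (pCross γb Ae σ0 σ z) (pCross γt Ae σ0 σ z)) (Icc a b) ∧
      StrictAntiOn (fun z => klBer (pCross γt Ae σ0 σ z) (pCross γb Ae σ0 σ z)) (Icc a b) := by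
  have hγb' : γb ∈ Icc (0 : ℝ) 1 := ⟨hγb.le, by linarith⟩
  have hγt' : γt ∈ Icc (0 : ℝ) 1 := ⟨by linarith, hγt.le⟩
  have hslopes : ∀ x ∈ Ioo a b,
      klBerDeriv (pCross γb Ae σ0 σ x) (pCross γt Ae σ0 σ x)
          (-outputDensity γb Ae σ0 σ x) (-outputDensity γt Ae σ0 σ x) < 0 ∧
        klBerDeriv (pCross γt Ae σ0 σ x) (pCross γb Ae σ0 σ x)
          (-outputDensity γt Ae σ0 σ x) (-outputDensity γb Ae σ0 σ x) < 0 := by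
    intro x hx
    have hx' : x ∈ Ioo 0 Ae := ⟨ha.trans_lt hx.1, hx.2.trans_le hb⟩
    obtain ⟨hq, hr⟩ := gaussQ_lt_half_lt_gaussQ (σ := σ) hσ0 hx'
    have hα := darkDensity_pos hσ0 x
    have hβ := pulseDensity_pos (Ae := Ae) (σ := σ) hσ0 x
    exact klBerDeriv_neg_of_lt (pCross_mem_Ioo hγb'.1 hγb'.2 x).1
      (pCross_lt_pCross hσ0 hx' hγbt) (pCross_mem_Ioo hγt'.1 hγt'.2 x).2
      (outputDensity_nonneg hγb' hσ0 x) (outputDensity_nonneg hγt' hσ0 x)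
      (mix_lt_of_lt_upperThresholdConst hγb hγbt hγt.le (gaussQ_pos _).le (hq.trans hr) hr.le
        hα (hdens x hx))
  exact ⟨strictAntiOn_Icc_of_hasDerivAt_neg (hasDerivAt_klBer_pCross hγb' hγt')
      fun x hx => (hslopes x hx).1,
    strictAntiOn_Icc_of_hasDerivAt_neg (hasDerivAt_klBer_pCross hγt' hγb')
      fun x hx => (hslopes x hx).2⟩

end Monotonicity

section Maximizers

variable {ι κ : Type*} [LinearOrder ι] [LinearOrder κ] {f g : ι → κ} {s : Set ι} {a b : ι}

lemma le_of_isMaxOn_min_of_strictMonoOn (hb : b ∈ s)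
    (hmax : IsMaxOn (fun z => min (f z) (g z)) s a) (hf : StrictMonoOn f (Icc a b))
    (hg : StrictMonoOn g (Icc a b)) : b ≤ a := by
  by_contra! hab
  have ha' : a ∈ Icc a b := ⟨le_rfl, hab.le⟩
  have hb' : b ∈ Icc a b := ⟨hab.le, le_rfl⟩
  exact (hmax hb).not_gt
    (lt_min (min_lt_of_left_lt (hf ha' hb' hab)) (min_lt_of_right_lt (hg ha' hb' hab)))

lemma le_of_isMaxOn_min_of_strictAntiOn (ha : a ∈ s)
    (hmax : IsMaxOn (fun z => min (f z) (g z)) s b) (hf : StrictAntiOn f (Icc a b))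
    (hg : StrictAntiOn g (Icc a b)) : b ≤ a := by
  by_contra! hab
  have ha' : a ∈ Icc a b := ⟨le_rfl, hab.le⟩
  have hb' : b ∈ Icc a b := ⟨hab.le, le_rfl⟩
  exact (hmax ha).not_gt
    (lt_min (min_lt_of_left_lt (hf ha' hb' hab)) (min_lt_of_right_lt (hg ha' hb' hab)))

end Maximizers

theorem stmt_19 (γb γt Ae : ℝ)
    (hγb : 0 < γb) (hγbt : γb < γt) (hγt : γt < 1) (hAe : 0 < Ae) :
    ∃ Cl Cu : ℝ, 0 < Cl ∧ 0 < Cu ∧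
      ∀ σ σ0 : ℝ, 0 < σ → 0 < σ0 →
        0 ≤ Zrad Ae σ σ0 Cl → 0 ≤ Zrad Ae σ σ0 Cu →
        Zfun Ae σ σ0 Cl ∈ Set.Icc 0 Ae → Zfun Ae σ σ0 Cu ∈ Set.Icc 0 Ae →
        ∀ zhat ∈ Set.Icc (0 : ℝ) Ae,
          IsMaxOn (fun z : ℝ =>
              min (klBer (pCross γb Ae σ0 σ z) (pCross γt Ae σ0 σ z))
                (klBer (pCross γt Ae σ0 σ z) (pCross γb Ae σ0 σ z)))
            (Set.Icc 0 Ae) zhat →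
          Zfun Ae σ σ0 Cl ≤ zhat ∧ zhat ≤ Zfun Ae σ σ0 Cu := by
  have hγt0 : 0 < γt := hγb.trans hγbt
  have hCl : 0 < lowerThresholdConst γt := div_pos (by nlinarith) (by nlinarith)
  have hCu : 0 < upperThresholdConst γb γt := div_pos (by positivity) (by nlinarith)
  refine ⟨lowerThresholdConst γt, upperThresholdConst γb γt, hCl, hCu, ?_⟩
  intro σ σ0 hσ hσ0 hradl hradu hZl hZu zhat hzhat hmax
  constructor
  · obtain ⟨hf, hg⟩ := strictMonoOn_klBer_pCross hγb hγbt hγt hσ0 hzhat.1 hZl.2 fun x hx =>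
      (mul_pulseDensity_lt_darkDensity_iff hσ0 hCl).2 <| exponentGap_Zfun hσ hσ0 hradl ▸
        exponentGap_strictAntiOn hσ0 hAe (hzhat.1.trans hx.1.le) hZl.1 hx.2
    exact le_of_isMaxOn_min_of_strictMonoOn hZl hmax hf hg
  · obtain ⟨hf, hg⟩ := strictAntiOn_klBer_pCross hγb hγbt hγt hσ0 hZu.1 hzhat.2 fun x hx =>
      (darkDensity_lt_mul_pulseDensity_iff hσ0 hCu).2 <| exponentGap_Zfun hσ hσ0 hradu ▸
        exponentGap_strictAntiOn hσ0 hAe hZu.1 (hZu.1.trans hx.1.le) hx.1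
    exact le_of_isMaxOn_min_of_strictAntiOn hZu hmax hf hg
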